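/- arXiv:1805.11796 — 2 statements merged into one kernel-verified Lean document; each statement's English description precedes it below -/
import Mathlib

section
/- Let X and Y be separable metrizable spaces and f : X → Y a function. The following are equivalent: (i) f ∈ dec(Σ^0_2, Δ^0_3); (ii) there is a countable family (A_n) of Σ^0_3 subsets of X with X = ⋃_n A_n such that each restriction f↾A_n is Σ^0_2-measurable; (iii) there is a countable family (A_n) of Σ^0_3 subsets of X with X = ⋃_n A_n such that each restriction f↾A_n ∈ dec(Σ^0_2, Δ^0_3) (relative to A_n). -/
open Set Topology

/-- A set is `Σ⁰₂` (Fσ) if it is a countable union of closed sets. -/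
def IsFsigma {X : Type*} [TopologicalSpace X] (A : Set X) : Prop :=
  ∃ F : ℕ → Set X, (∀ n, IsClosed (F n)) ∧ A = ⋃ n, F n

/-- A set is `Σ⁰₃` if it is a countable union of Gδ sets. -/
def IsSigma03 {X : Type*} [TopologicalSpace X] (A : Set X) : Prop :=
  ∃ G : ℕ → Set X, (∀ n, IsGδ (G n)) ∧ A = ⋃ n, G n

/-- A set is `Δ⁰₃` if both it and its complement are `Σ⁰₃`. -/
def IsDelta03 {X : Type*} [TopologicalSpace X] (A : Set X) : Prop :=
  IsSigma03 A ∧ IsSigma03 Aᶜ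

/-- `Σ⁰₂`-measurable function: preimages of open sets are Fσ. -/
def Sigma2Measurable {X Y : Type*} [TopologicalSpace X] [TopologicalSpace Y]
    (f : X → Y) : Prop :=
  ∀ U : Set Y, IsOpen U → IsFsigma (f ⁻¹' U)

/-- `Σ⁰₃`-measurable function: preimages of open sets are `Σ⁰₃`. -/
def Sigma3Measurable {X Y : Type*} [TopologicalSpace X] [TopologicalSpace Y]
    (f : X → Y) : Prop :=
  ∀ U : Set Y, IsOpen U → IsSigma03 (f ⁻¹' U)

/-- `f ∈ dec(Σ⁰₂, Δ⁰₃)`: there is a countable partition of the domain into `Δ⁰₃` pieces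
on each of which `f` restricts (with the subspace topology) to a `Σ⁰₂`-measurable function. -/
def DecSigma2 {X Y : Type*} [TopologicalSpace X] [TopologicalSpace Y]
    (f : X → Y) : Prop :=
  ∃ A : ℕ → Set X, (∀ m n, m ≠ n → Disjoint (A m) (A n)) ∧ (⋃ n, A n) = Set.univ ∧
    (∀ n, IsDelta03 (A n)) ∧ ∀ n, Sigma2Measurable ((A n).restrict f)

/-- `f ∈ dec(Σ⁰₁, Δ⁰₃)`: there is a countable partition of the domain into `Δ⁰₃` pieces
on each of which `f` restricts (with the subspace topology) to a continuous function. -/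
def DecCont {X Y : Type*} [TopologicalSpace X] [TopologicalSpace Y]
    (f : X → Y) : Prop :=
  ∃ A : ℕ → Set X, (∀ m n, m ≠ n → Disjoint (A m) (A n)) ∧ (⋃ n, A n) = Set.univ ∧
    (∀ n, IsDelta03 (A n)) ∧ ∀ n, Continuous ((A n).restrict f)

set_option linter.unusedSectionVars false

section MyAux
variable {X Y : Type*} [TopologicalSpace X] [TopologicalSpace Y]

lemma IsGδ.mySigma03 {A : Set X} (h : IsGδ A) : IsSigma03 A :=
  ⟨fun _ => A, fun _ => h, (iUnion_const A).symm⟩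

lemma mySigma03_iUnion {A : ℕ → Set X} (h : ∀ n, IsSigma03 (A n)) :
    IsSigma03 (⋃ n, A n) := by
  choose G hG hGA using h
  refine ⟨fun k => G k.unpair.1 k.unpair.2, fun k => hG _ _, ?_⟩
  rw [show (⋃ n, (fun k : ℕ => G k.unpair.1 k.unpair.2) n) = ⋃ i, ⋃ j, G i j from Set.iUnion_unpair G]
  exact iUnion_congr hGA

lemma mySigma03_union {A B : Set X} (hA : IsSigma03 A) (hB : IsSigma03 B) :
    IsSigma03 (A ∪ B) := by
  have : A ∪ B = ⋃ n : ℕ, (if n = 0 then A else B) := by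
    ext x; simp [Set.mem_iUnion]
    constructor
    · rintro (h | h); exacts [⟨0, by simp [h]⟩, ⟨1, by simp [h]⟩]
    · rintro ⟨n, hn⟩; by_cases h : n = 0 <;> simp [h] at hn <;> tauto
  rw [this]
  exact mySigma03_iUnion fun n => by by_cases h : n = 0 <;> simp [h] <;> [exact hA; exact hB]

lemma mySigma03_inter {A B : Set X} (hA : IsSigma03 A) (hB : IsSigma03 B) :
    IsSigma03 (A ∩ B) := by
  obtain ⟨G, hG, rfl⟩ := hA
  obtain ⟨H, hH, rfl⟩ := hB
  refine ⟨fun k => G k.unpair.1 ∩ H k.unpair.2, fun k => (hG _).inter (hH _), ?_⟩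
  rw [show (⋃ n, (fun k : ℕ => G k.unpair.1 ∩ H k.unpair.2) n) = ⋃ i, ⋃ j, G i ∩ H j from
    Set.iUnion_unpair fun i j => G i ∩ H j, Set.iUnion_inter]
  exact iUnion_congr fun i => by rw [Set.inter_iUnion]

end MyAux

section MyMetr
variable {X Y : Type*} [TopologicalSpace X] [TopologicalSpace.MetrizableSpace X]
  [TopologicalSpace Y]

lemma myClosed_isGδ {A : Set X} (h : IsClosed A) : IsGδ A := by
  letI := TopologicalSpace.metrizableSpaceMetric X
  exact h.isGδ

lemma IsFsigma.mySigma03 {A : Set X} (h : IsFsigma A) : IsSigma03 A := by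
  obtain ⟨F, hF, rfl⟩ := h
  exact mySigma03_iUnion fun n => (myClosed_isGδ (hF n)).mySigma03

lemma IsGδ.myDelta03 {A : Set X} (h : IsGδ A) : IsDelta03 A := by
  refine ⟨h.mySigma03, ?_⟩
  obtain ⟨U, hU, rfl⟩ := h.eq_iInter_nat
  rw [Set.compl_iInter]
  exact IsFsigma.mySigma03 ⟨fun n => (U n)ᶜ, fun n => (hU n).isClosed_compl, rfl⟩

lemma myDelta03_compl {A : Set X} (h : IsDelta03 A) : IsDelta03 Aᶜ :=
  ⟨h.2, by rw [compl_compl]; exact h.1⟩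

lemma myDelta03_inter {A B : Set X} (hA : IsDelta03 A) (hB : IsDelta03 B) :
    IsDelta03 (A ∩ B) := by
  refine ⟨mySigma03_inter hA.1 hB.1, ?_⟩
  rw [Set.compl_inter]
  exact mySigma03_union hA.2 hB.2

lemma myDelta03_univ : IsDelta03 (univ : Set X) := IsGδ.univ.myDelta03
lemma myDelta03_empty : IsDelta03 (∅ : Set X) := IsGδ.empty.myDelta03

end MyMetr

section MySub
variable {X Y Z : Type*} [TopologicalSpace X] [TopologicalSpace Y] [TopologicalSpace Z]

lemma myFsigma_preimage {g : Z → X} (hg : Continuous g) {A : Set X} (h : IsFsigma A) :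
    IsFsigma (g ⁻¹' A) := by
  obtain ⟨F, hF, rfl⟩ := h
  exact ⟨fun n => g ⁻¹' F n, fun n => (hF n).preimage hg, by rw [Set.preimage_iUnion]⟩

lemma mySigma2_comp {g : Z → Y} (hg : Sigma2Measurable g) {e : X → Z} (he : Continuous e) :
    Sigma2Measurable (g ∘ e) := fun U hU => myFsigma_preimage he (hg U hU)

lemma mySigma2_restrict_mono {f : X → Y} {S T : Set X} (hTS : T ⊆ S)
    (h : Sigma2Measurable (S.restrict f)) : Sigma2Measurable (T.restrict f) :=
  mySigma2_comp h (continuous_inclusion hTS)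

lemma mySigma03_image {A : Set X} (hA : IsSigma03 A) {T : Set A}
    (hT : IsSigma03 T) : IsSigma03 (Subtype.val '' T) := by
  obtain ⟨G, hG, rfl⟩ := hT
  rw [Set.image_iUnion]
  refine mySigma03_iUnion fun n => ?_
  obtain ⟨U, hU, hGU⟩ := (hG n).eq_iInter_nat
  choose V hV hVU using fun m => isOpen_induced_iff.1 (hU m)
  have : Subtype.val '' G n = A ∩ ⋂ m, V m := by
    rw [hGU]
    have : (⋂ m, U m) = Subtype.val ⁻¹' (⋂ m, V m) := by
      rw [Set.preimage_iInter]; exact iInter_congr fun m => (hVU m).symm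
    rw [this, Subtype.image_preimage_coe]
  rw [this]
  exact mySigma03_inter hA (IsGδ.iInter_of_isOpen hV).mySigma03

lemma myMem_of_mem_image {A : Set X} {C : Set A} {x : X}
    (hx : x ∈ Subtype.val '' C) : x ∈ A := by
  obtain ⟨c, _, rfl⟩ := hx; exact c.2

lemma myMemC_of_mem_image {A : Set X} {C : Set A} {x : X}
    (hx : x ∈ Subtype.val '' C) (h : x ∈ A) : (⟨x, h⟩ : A) ∈ C := by
  obtain ⟨c, hc, rfl⟩ := hx
  have he : (⟨c.1, h⟩ : A) = c := Subtype.ext rfl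
  rw [he]; exact hc

lemma mySigma2_image_restrict {f : X → Y} {A : Set X} {C : Set A}
    (hC : Sigma2Measurable (C.restrict (A.restrict f))) :
    Sigma2Measurable ((Subtype.val '' C).restrict f) := by
  have he : Continuous (fun x : (Subtype.val '' C : Set X) =>
      (⟨⟨x.1, myMem_of_mem_image x.2⟩, myMemC_of_mem_image x.2 _⟩ : C)) := by
    apply Continuous.subtype_mk
    exact Continuous.subtype_mk continuous_subtype_val _
  exact mySigma2_comp hC he

lemma myDecSigma2_of_sigma2 {f : X → Y} [TopologicalSpace.MetrizableSpace X]
    (h : Sigma2Measurable f) : DecSigma2 f := by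
  refine ⟨fun n => if n = 0 then univ else ∅, ?_, ?_, ?_, ?_⟩
  · intro m n hmn
    rcases Nat.eq_zero_or_pos m with rfl | hm
    · have : n ≠ 0 := fun h' => hmn h'.symm
      simp [this]
    · simp [Nat.pos_iff_ne_zero.1 hm]
  · apply eq_univ_of_univ_subset
    intro x _
    exact mem_iUnion.2 ⟨0, by simp⟩
  · intro n; by_cases h' : n = 0 <;> simp [h', myDelta03_univ, myDelta03_empty]
  · intro n
    exact mySigma2_comp h continuous_subtype_val

end MySub

section MyKey
variable {X Y : Type*} [TopologicalSpace X] [TopologicalSpace.MetrizableSpace X]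
  [TopologicalSpace Y]

lemma myDelta03_biInter_compl (E : ℕ → Set X) (hE : ∀ k, IsDelta03 (E k)) (n : ℕ) :
    IsDelta03 (⋂ i < n, (E i)ᶜ) := by
  induction n with
  | zero => simpa using (myDelta03_univ : IsDelta03 (univ : Set X))
  | succ n ih =>
    rw [Set.biInter_lt_succ]
    exact myDelta03_inter ih (myDelta03_compl (hE n))

lemma myKey {f : X → Y} (A : ℕ → Set X) (hA : ∀ n, IsSigma03 (A n))
    (hcov : (⋃ n, A n) = univ) (hm : ∀ n, Sigma2Measurable ((A n).restrict f)) :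
    DecSigma2 f := by
  choose G hG hGA using hA
  let E : ℕ → Set X := fun k => G k.unpair.1 k.unpair.2
  have hEsub : ∀ k, E k ⊆ A k.unpair.1 := fun k => (hGA k.unpair.1) ▸ subset_iUnion _ k.unpair.2
  have hEd : ∀ k, IsDelta03 (E k) := fun k => (hG _ _).myDelta03
  have hEcov : (⋃ k, E k) = univ := by
    have h1 : (⋃ k, E k) = ⋃ i, ⋃ j, G i j := Set.iUnion_unpair G
    rw [h1, ← hcov]
    exact iUnion_congr fun n => (hGA n).symm
  refine ⟨disjointed E, fun m n h => disjoint_disjointed E h,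
    by rw [iUnion_disjointed, hEcov], ?_, ?_⟩
  · intro k
    rw [disjointed_eq_inter_compl]
    exact myDelta03_inter (hEd k) (myDelta03_biInter_compl E hEd k)
  · intro k
    exact mySigma2_restrict_mono ((disjointed_subset E k).trans (hEsub k)) (hm _)

end MyKey


/-- Proposition 2.1 for `dec(Σ⁰₂, Δ⁰₃)`: the three conditions are equivalent. -/
theorem stmt0 {X Y : Type*} [TopologicalSpace X] [TopologicalSpace.SeparableSpace X]
    [TopologicalSpace.MetrizableSpace X]
    [TopologicalSpace Y] [TopologicalSpace.SeparableSpace Y]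
    [TopologicalSpace.MetrizableSpace Y] (f : X → Y) :
    (DecSigma2 f ↔
      (∃ A : ℕ → Set X, (∀ n, IsSigma03 (A n)) ∧ (⋃ n, A n) = Set.univ ∧
        ∀ n, Sigma2Measurable ((A n).restrict f))) ∧
    (DecSigma2 f ↔
      (∃ A : ℕ → Set X, (∀ n, IsSigma03 (A n)) ∧ (⋃ n, A n) = Set.univ ∧
        ∀ n, DecSigma2 ((A n).restrict f))) := by
  constructor
  · constructor
    · rintro ⟨A, _, hcov, hd, hm⟩
      exact ⟨A, fun n => (hd n).1, hcov, hm⟩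
    · rintro ⟨A, h1, h2, h3⟩
      exact myKey A h1 h2 h3
  · constructor
    · rintro ⟨A, _, hcov, hd, hm⟩
      exact ⟨A, fun n => (hd n).1, hcov, fun n => myDecSigma2_of_sigma2 (hm n)⟩
    · rintro ⟨A, h1, h2, h3⟩
      choose C hCd hCcov hCdel hCm using h3
      let D : ℕ → Set X := fun k => Subtype.val '' (C k.unpair.1 k.unpair.2)
      apply myKey D
      · intro k
        exact mySigma03_image (h1 _) (hCdel _ _).1
      · calc (⋃ k, D k) = ⋃ i, ⋃ j, Subtype.val '' (C i j) :=
              Set.iUnion_unpair fun i j => Subtype.val '' (C i j)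
          _ = ⋃ i, Subtype.val '' ⋃ j, C i j := iUnion_congr fun i => (Set.image_iUnion).symm
          _ = ⋃ i, A i := iUnion_congr fun i => by
              rw [hCcov i, Set.image_univ, Subtype.range_coe]
          _ = univ := h2
      · intro k
        exact mySigma2_image_restrict (hCm k.unpair.1 k.unpair.2)
end

section
/- Let X and Y be separable metrizable spaces and f : X → Y a function. The following are equivalent: (i) f ∈ dec(Σ^0_1, Δ^0_3); (ii) there is a countable family (A_n) of Σ^0_3 subsets of X with X = ⋃_n A_n such that each restriction f↾A_n is continuous; (iii) there is a countable family (A_n) of Σ^0_3 subsets of X with X = ⋃_n A_n such that each restriction f↾A_n ∈ dec(Σ^0_1, Δ^0_3) (relative to A_n). -/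
/-! Refine a cover by countably many `Σ⁰₃` sets on which `f` is continuous to a cover by
countably many `Gδ` sets `G n`. The sets `G n \ (G 0 ∪ ⋯ ∪ G (n - 1))` then partition `X`,
and they are `Δ⁰₃`: in a perfectly normal (e.g. metrizable) space closed sets are `Gδ`, so the
complement of a `Gδ` set is `Σ⁰₃`. For (iii) ⇒ (ii), a `Σ⁰₃` subset of a `Σ⁰₃` subspace is
`Σ⁰₃` in `X`, and `f` is continuous on it. -/

open Set Topology

theorem Set.exists_nat_iUnion_eq_of_countable {α ι : Type*} [Countable ι] {p : Set α → Prop}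
    (h₀ : p ∅) {s : ι → Set α} (hs : ∀ i, p (s i)) :
    ∃ t : ℕ → Set α, (∀ n, p (t n)) ∧ ⋃ n, t n = ⋃ i, s i := by
  have := Encodable.ofCountable ι
  exact ⟨fun n => ⋃ i ∈ Encodable.decode₂ ι n, s i,
    fun _ => Encodable.iUnion_decode₂_cases (C := p) h₀ hs, Encodable.iUnion_decode₂ s⟩

theorem Topology.IsInducing.exists_isGδ_preimage_eq {X Y : Type*} [TopologicalSpace X]
    [TopologicalSpace Y] {g : X → Y} (hg : IsInducing g) {s : Set X} (hs : IsGδ s) :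
    ∃ t : Set Y, IsGδ t ∧ g ⁻¹' t = s := by
  obtain ⟨U, hU, rfl⟩ := hs.eq_iInter_nat
  choose V hV hVU using fun n => hg.isOpen_iff.1 (hU n)
  exact ⟨⋂ n, V n, .iInter_of_isOpen hV, by rw [preimage_iInter]; exact iInter_congr hVU⟩

section Sigma03

variable {X : Type*} [TopologicalSpace X]

theorem IsGδ.isSigma03 {s : Set X} (hs : IsGδ s) : IsSigma03 s :=
  ⟨fun _ => s, fun _ => hs, (iUnion_const s).symm⟩

theorem isSigma03_iUnion_of_isGδ {ι : Type*} [Countable ι] {G : ι → Set X}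
    (hG : ∀ i, IsGδ (G i)) : IsSigma03 (⋃ i, G i) := by
  obtain ⟨H, hH, hHG⟩ := exists_nat_iUnion_eq_of_countable .empty hG
  exact ⟨H, hH, hHG.symm⟩

theorem isSigma03_iUnion {ι : Type*} [Countable ι] {s : ι → Set X}
    (hs : ∀ i, IsSigma03 (s i)) : IsSigma03 (⋃ i, s i) := by
  choose G hG hsG using hs
  simp_rw [hsG, ← iUnion_prod' fun p : ι × ℕ => G p.1 p.2]
  exact isSigma03_iUnion_of_isGδ fun p => hG p.1 p.2

theorem IsSigma03.union {s t : Set X} (hs : IsSigma03 s) (ht : IsSigma03 t) :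
    IsSigma03 (s ∪ t) := by
  rw [union_eq_iUnion]
  exact isSigma03_iUnion (Bool.forall_bool.2 ⟨ht, hs⟩)

theorem IsSigma03.inter_isGδ {s t : Set X} (hs : IsSigma03 s) (ht : IsGδ t) :
    IsSigma03 (s ∩ t) := by
  obtain ⟨G, hG, rfl⟩ := hs
  rw [iUnion_inter]
  exact isSigma03_iUnion_of_isGδ fun n => (hG n).inter ht

theorem IsSigma03.image_val {A : Set X} (hA : IsSigma03 A) {s : Set A} (hs : IsSigma03 s) :
    IsSigma03 (Subtype.val '' s) := by
  obtain ⟨G, hG, rfl⟩ := hs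
  rw [image_iUnion]
  refine isSigma03_iUnion fun n => ?_
  obtain ⟨T, hT, hTG⟩ := IsInducing.subtypeVal.exists_isGδ_preimage_eq (hG n)
  rw [← hTG, Subtype.image_preimage_coe]
  exact hA.inter_isGδ hT

variable [PerfectlyNormalSpace X]

theorem IsGδ.isSigma03_compl {s : Set X} (hs : IsGδ s) : IsSigma03 sᶜ := by
  obtain ⟨U, hU, rfl⟩ := hs.eq_iInter_nat
  rw [compl_iInter]
  exact isSigma03_iUnion_of_isGδ fun n => (hU n).isClosed_compl.isGδ

theorem IsGδ.isDelta03 {s : Set X} (hs : IsGδ s) : IsDelta03 s :=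
  ⟨hs.isSigma03, hs.isSigma03_compl⟩

theorem IsGδ.isDelta03_diff {s t : Set X} (hs : IsGδ s) (ht : IsGδ t) : IsDelta03 (s \ t) := by
  constructor
  · rw [sdiff_eq, inter_comm]
    exact ht.isSigma03_compl.inter_isGδ hs
  · rw [sdiff_eq, compl_inter, compl_compl]
    exact hs.isSigma03_compl.union ht.isSigma03

theorem isDelta03_disjointed {G : ℕ → Set X} (hG : ∀ n, IsGδ (G n)) (n : ℕ) :
    IsDelta03 (disjointed G n) := by
  cases n with
  | zero => exact disjointed_zero G ▸ (hG 0).isDelta03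
  | succ n =>
    rw [disjointed_add_one, partialSups_eq_biUnion_range]
    exact (hG _).isDelta03_diff (.biUnion (Finset.finite_toSet _) fun i _ => hG i)

end Sigma03

section Decomposition

variable {X Y : Type*} [TopologicalSpace X] [TopologicalSpace Y] {f : X → Y}
  [PerfectlyNormalSpace X]

theorem decCont_of_isGδ_cover {G : ℕ → Set X} (hG : ∀ n, IsGδ (G n))
    (hcover : ⋃ n, G n = univ) (hf : ∀ n, ContinuousOn f (G n)) : DecCont f :=
  ⟨disjointed G, fun _ _ hmn => disjoint_disjointed G hmn, by rw [iUnion_disjointed, hcover],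
    isDelta03_disjointed hG, fun n => ((hf n).mono (disjointed_subset G n)).domRestrict⟩

theorem Continuous.decCont (hf : Continuous f) : DecCont f :=
  decCont_of_isGδ_cover (fun _ => .univ) (iUnion_const _) fun _ => hf.continuousOn

theorem decCont_of_isSigma03_cover {ι : Type*} [Countable ι] {A : ι → Set X}
    (hA : ∀ i, IsSigma03 (A i)) (hcover : ⋃ i, A i = univ) (hf : ∀ i, ContinuousOn f (A i)) :
    DecCont f := by
  choose G hG hAG using hA
  obtain ⟨H, hH, hHG⟩ := exists_nat_iUnion_eq_of_countable
    (p := fun s => IsGδ s ∧ ContinuousOn f s) ⟨.empty, continuousOn_empty f⟩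
    (s := fun p : ι × ℕ => G p.1 p.2)
    fun p => ⟨hG p.1 p.2, (hf p.1).mono (hAG p.1 ▸ subset_iUnion _ p.2)⟩
  refine decCont_of_isGδ_cover (fun n => (hH n).1) ?_ fun n => (hH n).2
  rw [hHG, iUnion_prod', ← hcover]
  exact iUnion_congr fun i => (hAG i).symm

theorem decCont_of_isSigma03_cover_decCont {ι : Type*} [Countable ι] {A : ι → Set X}
    (hA : ∀ i, IsSigma03 (A i)) (hcover : ⋃ i, A i = univ)
    (hf : ∀ i, DecCont ((A i).domRestrict f)) : DecCont f := by
  choose B _ hBcover hB hfB using hf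
  refine decCont_of_isSigma03_cover (A := fun p : ι × ℕ => Subtype.val '' B p.1 p.2)
    (fun p => (hA p.1).image_val (hB p.1 p.2).1) ?_
    fun p => IsInducing.subtypeVal.continuousOn_image_iff.2
      (continuousOn_iff_continuous_domRestrict.2 (hfB p.1 p.2))
  simp_rw [iUnion_prod', ← image_iUnion, hBcover, image_univ, Subtype.range_coe, hcover]

theorem decCont_iff_exists_isSigma03_cover :
    DecCont f ↔ ∃ A : ℕ → Set X, (∀ n, IsSigma03 (A n)) ∧ ⋃ n, A n = univ ∧
      ∀ n, Continuous ((A n).domRestrict f) := by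
  refine ⟨fun ⟨A, _, hcover, hA, hfA⟩ => ⟨A, fun n => (hA n).1, hcover, hfA⟩, ?_⟩
  rintro ⟨A, hA, hcover, hfA⟩
  exact decCont_of_isSigma03_cover hA hcover fun n =>
    continuousOn_iff_continuous_domRestrict.2 (hfA n)

end Decomposition

theorem stmt1_general {X Y : Type*} [TopologicalSpace X]
    [TopologicalSpace.MetrizableSpace X]
    [TopologicalSpace Y] (f : X → Y) :
    (DecCont f ↔
      (∃ A : ℕ → Set X, (∀ n, IsSigma03 (A n)) ∧ (⋃ n, A n) = Set.univ ∧
        ∀ n, Continuous ((A n).restrict f))) ∧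
    (DecCont f ↔
      (∃ A : ℕ → Set X, (∀ n, IsSigma03 (A n)) ∧ (⋃ n, A n) = Set.univ ∧
        ∀ n, DecCont ((A n).restrict f))) := by
  refine ⟨decCont_iff_exists_isSigma03_cover, fun hf => ?_, fun ⟨_, hA, hcover, hf⟩ =>
    decCont_of_isSigma03_cover_decCont hA hcover hf⟩
  obtain ⟨A, hA, hcover, hfA⟩ := decCont_iff_exists_isSigma03_cover.1 hf
  exact ⟨A, hA, hcover, fun n => (hfA n).decCont⟩

/-- Proposition 2.1 for `dec(Σ⁰₁, Δ⁰₃)`: the three conditions are equivalent. -/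
theorem stmt1 {X Y : Type*} [TopologicalSpace X] [TopologicalSpace.SeparableSpace X]
    [TopologicalSpace.MetrizableSpace X]
    [TopologicalSpace Y] [TopologicalSpace.SeparableSpace Y]
    [TopologicalSpace.MetrizableSpace Y] (f : X → Y) :
    (DecCont f ↔
      (∃ A : ℕ → Set X, (∀ n, IsSigma03 (A n)) ∧ (⋃ n, A n) = Set.univ ∧
        ∀ n, Continuous ((A n).restrict f))) ∧
    (DecCont f ↔
      (∃ A : ℕ → Set X, (∀ n, IsSigma03 (A n)) ∧ (⋃ n, A n) = Set.univ ∧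
        ∀ n, DecCont ((A n).restrict f))) :=
  stmt1_general f
end
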